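/- arXiv:2412.14756 — 11 statements merged into one kernel-verified Lean document; each statement's English description precedes it below -/
import Mathlib

section
/- If f : ℝ → ℝ satisfies f(x+y) = f(x)f(y) - αxy for all real x, y with α ≠ 0, and f has a zero, then α > 0 and either f(x) = 1 - √α·x for all x, or f(x) = 1 + √α·x for all x. -/
/-!
Shifting by a zero `x₀` of `f` turns the equation into `f (x₀ + t) = -α x₀ t`, so `f` is affine.
Putting `x = y = 0` shows that `f 0` is idempotent, and `f 0 = 0` would force `f ≡ 0` and then
`α = 0`; hence `f 0 = 1`, i.e. `α x₀² = 1`. With `s = α x₀` this reads `f x = 1 - s x` and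
`s² = α`, so `α > 0` and `s = ±√α`.
-/

section

variable {R : Type*} [CommRing R] {α : R} {f : R → R}

theorem apply_eq_of_apply_eq_zero (hf : ∀ x y, f (x + y) = f x * f y - α * x * y) {x₀ : R}
    (h₀ : f x₀ = 0) (x : R) : f x = α * x₀ * (x₀ - x) := by
  have h := hf x₀ (x - x₀)
  rw [add_sub_cancel, h₀] at h
  rw [h]
  ring

theorem apply_zero_eq_one [IsDomain R] (hα : α ≠ 0)
    (hf : ∀ x y, f (x + y) = f x * f y - α * x * y) : f 0 = 1 := by
  have hidem : IsIdempotentElem (f 0) := by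
    simpa [IsIdempotentElem] using (hf 0 0).symm
  refine (IsIdempotentElem.iff_eq_zero_or_one.mp hidem).resolve_left fun hf₀ ↦ hα ?_
  have hzero (x : R) : f x = 0 := by simpa [hf₀] using hf x 0
  simpa [hzero] using hf 1 1

theorem exists_sq_eq_and_apply_eq_one_sub_mul [IsDomain R] (hα : α ≠ 0)
    (hf : ∀ x y, f (x + y) = f x * f y - α * x * y) {x₀ : R} (h₀ : f x₀ = 0) :
    ∃ s, s ^ 2 = α ∧ ∀ x, f x = 1 - s * x := by
  have hone : α * x₀ * x₀ = 1 := by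
    simpa using (apply_eq_of_apply_eq_zero hf h₀ 0).symm.trans (apply_zero_eq_one hα hf)
  refine ⟨α * x₀, ?_, fun x ↦ ?_⟩
  · linear_combination α * hone
  · rw [apply_eq_of_apply_eq_zero hf h₀ x]
    linear_combination hone

end

theorem stmt_0 (α : ℝ) (hα : α ≠ 0) (f : ℝ → ℝ)
    (hf : ∀ x y : ℝ, f (x + y) = f x * f y - α * x * y)
    (hz : ∃ x₀ : ℝ, f x₀ = 0) :
    0 < α ∧ ((∀ x : ℝ, f x = 1 - Real.sqrt α * x) ∨ (∀ x : ℝ, f x = 1 + Real.sqrt α * x)) := by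
  obtain ⟨x₀, h₀⟩ := hz
  obtain ⟨s, rfl, hfs⟩ := exists_sq_eq_and_apply_eq_one_sub_mul hα hf h₀
  have hs : s ≠ 0 := by rintro rfl; simp at hα
  refine ⟨by positivity, ?_⟩
  rw [Real.sqrt_sq_eq_abs]
  rcases abs_choice s with habs | habs
  · exact Or.inl fun x ↦ by rw [hfs, habs]
  · exact Or.inr fun x ↦ by rw [hfs, habs]; ring
end

section
/- Let X be a vector space over a field K (K = ℝ or ℂ), φ : X × X → K biadditive, f : X → K satisfying f(x+y) = f(x)f(y) - φ(x,y) for all x, y ∈ X. If there exists z₀ ∈ X with φ(z₀,z₀) ≠ 0, then there exists a ∈ K, a ≠ 0, such that f(x) = a·φ(x,z₀) + 1 for all x ∈ X. -/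
theorem stmt_2 {K : Type*} [RCLike K] {X : Type*} [AddCommGroup X] [Module K X]
    (φ : X → X → K)
    (hφ1 : ∀ x x' y : X, φ (x + x') y = φ x y + φ x' y)
    (hφ2 : ∀ x y y' : X, φ x (y + y') = φ x y + φ x y')
    (f : X → K)
    (hf : ∀ x y : X, f (x + y) = f x * f y - φ x y)
    (z₀ : X) (hz₀ : φ z₀ z₀ ≠ 0) :
    ∃ a : K, a ≠ 0 ∧ ∀ x : X, f x = a * φ x z₀ + 1 := by
  have key : ∀ x y z : X, φ x y * (f z - 1) = φ y z * (f x - 1) := by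
    intro x y z
    have h1 := hf (x + y) z
    have h2 := hf x (y + z)
    rw [hf x y, hφ1 x y z] at h1
    rw [hf y z, hφ2 x y z] at h2
    rw [add_assoc] at h1
    rw [h2] at h1
    ring_nf
    linear_combination h1
  have hne : f z₀ - 1 ≠ 0 := by
    intro h
    have h1 : ∀ x, f x = 1 := by
      intro x
      have := key x z₀ z₀
      rw [h, mul_zero] at this
      have := (mul_eq_zero.mp this.symm).resolve_left hz₀
      linear_combination this
    have := hf z₀ z₀
    rw [h1] at this
    apply hz₀
    linear_combination this + (f z₀ + 1) * h
  refine ⟨(f z₀ - 1) / φ z₀ z₀, div_ne_zero hne hz₀, fun x => ?_⟩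
  have := key x z₀ z₀
  field_simp
  linear_combination -this
end

section
/- Let X be a vector space over K ∈ {ℝ, ℂ}, φ : X × X → K biadditive, f : X → K satisfying f(x+y) = f(x)f(y) - φ(x,y) for all x, y, and suppose φ(z₀,z₀) ≠ 0 for some z₀. Then there exists a ∈ K, a ≠ 0, with f(x) = a·φ(x,z₀) + 1 for all x and a²·φ(x,z₀)² = φ(x,x) for all x ∈ X. -/
theorem stmt_3 {K : Type*} [RCLike K] {X : Type*} [AddCommGroup X] [Module K X]
    (φ : X → X → K)
    (hφ1 : ∀ x x' y : X, φ (x + x') y = φ x y + φ x' y)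
    (hφ2 : ∀ x y y' : X, φ x (y + y') = φ x y + φ x y')
    (f : X → K)
    (hf : ∀ x y : X, f (x + y) = f x * f y - φ x y)
    (z₀ : X) (hz₀ : φ z₀ z₀ ≠ 0) :
    ∃ a : K, a ≠ 0 ∧ (∀ x : X, f x = a * φ x z₀ + 1) ∧
      (∀ x : X, a ^ 2 * (φ x z₀) ^ 2 = φ x x) := by
  have key : ∀ x y z : X, φ x y * (f z - 1) = φ y z * (f x - 1) := by
    intro x y z
    have h1 := hf (x + y) z
    have h2 := hf x (y + z)
    rw [hf x y, hφ1 x y z] at h1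
    rw [hf y z, hφ2 x y z] at h2
    have h3 : (f x * f y - φ x y) * f z - (φ x z + φ y z)
        = f x * (f y * f z - φ y z) - (φ x y + φ x z) := by
      rw [← h1, ← h2, add_assoc]
    linear_combination -h3
  have hfz : f z₀ - 1 ≠ 0 := by
    intro h0
    apply hz₀
    have hall : ∀ z : X, f z = 1 := by
      intro z
      have hk := key z₀ z₀ z
      rw [h0, mul_zero] at hk
      rcases mul_eq_zero.mp hk with h | h
      · exact absurd h hz₀
      · exact sub_eq_zero.mp h
    have h2 := hf z₀ z₀
    rw [hall (z₀ + z₀), hall z₀] at h2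
    linear_combination h2
  set a : K := (f z₀ - 1) / φ z₀ z₀ with ha
  have hform : ∀ y : X, f y = a * φ y z₀ + 1 := by
    intro y
    have hk := key y z₀ z₀
    rw [ha]
    field_simp
    linear_combination -hk
  refine ⟨a, div_ne_zero hfz hz₀, hform, ?_⟩
  intro x
  have h1 := hf x x
  rw [hform (x + x), hform x, hφ1 x x z₀] at h1
  linear_combination -h1
end

section
/- Let X be a real vector space and φ : X × X → ℝ biadditive. If there exists z₀ ∈ X with φ(z₀,z₀) < 0, then there is no function f : X → ℝ satisfying f(x+y) = f(x)f(y) - φ(x,y) for all x, y ∈ X. -/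
theorem stmt_4 {X : Type*} [AddCommGroup X] [Module ℝ X]
    (φ : X → X → ℝ)
    (hφ1 : ∀ x x' y : X, φ (x + x') y = φ x y + φ x' y)
    (hφ2 : ∀ x y y' : X, φ x (y + y') = φ x y + φ x y')
    (z₀ : X) (hz₀ : φ z₀ z₀ < 0) :
    ¬ ∃ f : X → ℝ, ∀ x y : X, f (x + y) = f x * f y - φ x y := by
  rintro ⟨f, hf⟩
  have e1 := hf z₀ z₀
  have e2 := hf (z₀ + z₀) z₀
  have e3 := hf (z₀ + z₀ + z₀) z₀
  have e4 := hf (z₀ + z₀) (z₀ + z₀)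
  have hass : (z₀ + z₀ + z₀) + z₀ = (z₀ + z₀) + (z₀ + z₀) := by abel
  rw [hass] at e3
  have p2 : φ (z₀ + z₀) z₀ = φ z₀ z₀ + φ z₀ z₀ := hφ1 _ _ _
  have p3 : φ (z₀ + z₀ + z₀) z₀ = φ z₀ z₀ + φ z₀ z₀ + φ z₀ z₀ := by
    rw [hφ1, p2]
  have p4 : φ (z₀ + z₀) (z₀ + z₀) = φ z₀ z₀ + φ z₀ z₀ + (φ z₀ z₀ + φ z₀ z₀) := by
    rw [hφ2, p2]
  nlinarith [sq_nonneg (f z₀ - 1), e1, e2, e3, e4, p2, p3, p4, hz₀]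
end

section
/- Let X be a complex vector space, φ : X × X → ℂ biadditive with φ(z₀,z₀) ≠ 0 for some z₀, f : X → ℂ satisfying f(x+y) = f(x)f(y) - φ(x,y), and w : X → ℂ a map with w(x)² = φ(x,x) for all x. Then for every x ∈ X, f(x) = w(x) + 1 or f(x) = -w(x) + 1. -/
theorem stmt_5 {X : Type*} [AddCommGroup X] [Module ℂ X]
    (φ : X → X → ℂ)
    (hφ1 : ∀ x x' y : X, φ (x + x') y = φ x y + φ x' y)
    (hφ2 : ∀ x y y' : X, φ x (y + y') = φ x y + φ x y')
    (z₀ : X) (hz₀ : φ z₀ z₀ ≠ 0)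
    (f : X → ℂ)
    (hf : ∀ x y : X, f (x + y) = f x * f y - φ x y)
    (w : X → ℂ) (hw : ∀ x : X, (w x) ^ 2 = φ x x) :
    ∀ x : X, f x = w x + 1 ∨ f x = -w x + 1 := by
  -- key identity
  have key : ∀ x y z : X, φ x y * (f z - 1) = φ y z * (f x - 1) := by
    intro x y z
    have h1 := hf (x + y) z
    have h2 := hf x (y + z)
    rw [hf x y, hφ1 x y z] at h1
    rw [hf y z, hφ2 x y z] at h2
    have hA : f (x + y + z) = f (x + (y + z)) := by rw [add_assoc]
    linear_combination h1 - h2 - hA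
  have hc : f z₀ - 1 ≠ 0 := by
    intro h0
    have hall : ∀ x : X, f x - 1 = 0 := by
      intro x
      have h := key x z₀ z₀
      rw [h0, mul_zero] at h
      exact (mul_eq_zero.mp h.symm).resolve_left hz₀
    have h1 := hf z₀ z₀
    have h2 := hall z₀
    have h3 := hall (z₀ + z₀)
    apply hz₀
    linear_combination h1 + (f z₀ + 1) * h2 - h3
  -- φ x z₀ * c = φ z₀ z₀ * (f x - 1)
  have hxz : ∀ x : X, φ x z₀ * (f z₀ - 1) = φ z₀ z₀ * (f x - 1) := fun x => key x z₀ z₀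
  -- φ x x * c = φ x z₀ * (f x - 1)
  have hxx : ∀ x : X, φ x x * (f z₀ - 1) = φ x z₀ * (f x - 1) := fun x => key x x z₀
  -- c² = φ z₀ z₀
  have hc2 : (f z₀ - 1) ^ 2 = φ z₀ z₀ := by
    have h1 := hf z₀ z₀
    have h2 := hxz (z₀ + z₀)
    rw [hφ1 z₀ z₀ z₀] at h2
    have : φ z₀ z₀ * ((f z₀ - 1) ^ 2 - φ z₀ z₀) = 0 := by
      linear_combination -h2 - φ z₀ z₀ * h1
    have := (mul_eq_zero.mp this).resolve_left hz₀
    linear_combination this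
  intro x
  have hsq : (f x - 1) ^ 2 = φ x x := by
    have h1 := hxz x
    have h2 := hxx x
    have : φ z₀ z₀ * ((f x - 1) ^ 2 - φ x x) = 0 := by
      linear_combination -(f x - 1) * h1 - (f z₀ - 1) * h2 + φ x x * hc2
    have := (mul_eq_zero.mp this).resolve_left hz₀
    linear_combination this
  have : (f x - 1 - w x) * (f x - 1 + w x) = 0 := by
    linear_combination hsq - hw x
  rcases mul_eq_zero.mp this with h | h
  · left; linear_combination h
  · right; linear_combination h
end

section
/- If f : ℝ → ℝ satisfies f(x+y) = f(x)f(y) - αxy for all x, y ∈ ℝ with α ≠ 0, then α > 0 and either f(x) = 1 - √α·x for all x, or f(x) = 1 + √α·x for all x. -/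
theorem stmt_8 (α : ℝ) (hα : α ≠ 0) (f : ℝ → ℝ)
    (hf : ∀ x y : ℝ, f (x + y) = f x * f y - α * x * y) :
    0 < α ∧ ((∀ x : ℝ, f x = 1 - Real.sqrt α * x) ∨ (∀ x : ℝ, f x = 1 + Real.sqrt α * x)) := by
  have h00 := hf 0 0
  norm_num at h00
  have h0 : f 0 = 1 := by
    by_contra h
    have hz : f 0 = 0 := by
      have hm : f 0 * (f 0 - 1) = 0 := by nlinarith
      rcases mul_eq_zero.mp hm with h1 | h1
      · exact h1
      · exact absurd (by linarith) h
    have hx0 : ∀ x, f x = 0 := by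
      intro x
      have := hf x 0
      simp [hz] at this
      exact this
    have h11 := hf 1 1
    rw [hx0 1, hx0 (1 + 1)] at h11
    apply hα
    nlinarith
  set c := f 1 - 1 with hc
  have hlin : ∀ x, f x = 1 + c * x := by
    intro x
    have h1 := hf (x + 1) 1
    have h2 := hf x (1 + 1)
    have h3 := hf x 1
    have h4 := hf 1 1
    have hxx : x + 1 + 1 = x + (1 + 1) := by ring
    rw [hxx] at h1
    have e := h2.symm.trans h1
    rw [h3, h4] at e
    have key : α * (x * f 1 + 1) = α * (f x + x) := by linear_combination e
    have h5 := mul_left_cancel₀ hα key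
    rw [hc]; linarith
  have hcsq : c ^ 2 = α := by
    have h11 := hf 1 1
    rw [hlin 1, hlin (1 + 1)] at h11
    linear_combination -h11
  have hcne : c ≠ 0 := fun h => hα (by rw [← hcsq, h]; ring)
  have hαpos : 0 < α := by rw [← hcsq]; positivity
  refine ⟨hαpos, ?_⟩
  have hsq : Real.sqrt α = |c| := by rw [← hcsq, Real.sqrt_sq_eq_abs]
  rcases le_or_gt c 0 with hcle | hcgt
  · left
    intro x
    rw [hlin x, hsq, abs_of_nonpos hcle]; ring
  · right
    intro x
    rw [hlin x, hsq, abs_of_pos hcgt]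
end

section
/- Let α ∈ ℂ, α ≠ 0, and let w be a complex square root of α (w² = α). If f : ℂ → ℂ satisfies f(x+y) = f(x)f(y) - αxy for all x, y ∈ ℂ, then either f(x) = 1 + w·x for all x, or f(x) = 1 - w·x for all x. -/
theorem stmt_10 (α : ℂ) (hα : α ≠ 0) (w : ℂ) (hw : w ^ 2 = α) (f : ℂ → ℂ)
    (hf : ∀ x y : ℂ, f (x + y) = f x * f y - α * x * y) :
    (∀ x : ℂ, f x = 1 + w * x) ∨ (∀ x : ℂ, f x = 1 - w * x) := by
  have key : ∀ x : ℂ, f x = 1 + (f 1 - 1) * x := by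
    intro x
    have h1 := hf (x + 1) 1
    have h2 := hf x 1
    have h3 := hf x 2
    have h4 := hf 1 1
    rw [show x + 1 + 1 = x + 2 by ring] at h1
    rw [show (1 : ℂ) + 1 = 2 by norm_num] at h4
    rw [h3, h4, h2] at h1
    have h5 : α * (f x - (1 + (f 1 - 1) * x)) = 0 := by linear_combination -h1
    rcases mul_eq_zero.mp h5 with h | h
    · exact absurd h hα
    · linear_combination h
  have hc : (f 1 - 1) ^ 2 = α := by
    have h4 := hf 1 1
    rw [show (1 : ℂ) + 1 = 2 by norm_num] at h4
    rw [key 2, key 1] at h4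
    linear_combination -h4
  have : (f 1 - 1 - w) * (f 1 - 1 + w) = 0 := by linear_combination hc - hw
  rcases mul_eq_zero.mp this with h | h
  · left
    intro x
    rw [key x, sub_eq_zero.mp h]
  · right
    intro x
    rw [key x]
    have h' : f 1 - 1 = -w := by linear_combination h
    rw [h']
    ring
end

section
/- Let X be a real inner product space with dim X ≥ 2. Then there is no function f : X → ℝ satisfying f(x+y) = f(x)f(y) - ⟨x,y⟩ for all x, y ∈ X. -/
/-!
Comparing the two ways of expanding `f (x + y + z)` gives
`⟪x, y⟫ (1 - f z) = ⟪y, z⟫ (1 - f x)`. Taking `y = x ≠ 0` shows `f z = 1` for every `z ⟂ x`;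
applied to `z` and `z + z` this gives `1 = f (z + z) = f z ^ 2 - ‖z‖ ^ 2 = 1 - ‖z‖ ^ 2`, so
`x` has no nonzero orthogonal vector, which is impossible once `dim X ≥ 2`.
-/

open scoped RealInnerProductSpace

section

variable {X : Type*} [NormedAddCommGroup X] [InnerProductSpace ℝ X]

theorem exists_ne_zero_inner_eq_zero_of_two_le_rank (hdim : 2 ≤ Module.rank ℝ X) :
    ∃ x z : X, x ≠ 0 ∧ z ≠ 0 ∧ ⟪x, z⟫ = 0 := by
  have : Nontrivial X := rank_pos_iff_nontrivial.mp (lt_of_lt_of_le (by norm_num) hdim)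
  obtain ⟨x, hx⟩ := exists_ne (0 : X)
  have hspan : (ℝ ∙ x)ᗮ ≠ ⊥ := by
    rw [Ne, Submodule.orthogonal_eq_bot_iff]
    intro htop
    have hrank := rank_span_le (R := ℝ) ({x} : Set X)
    rw [htop, rank_top, Cardinal.mk_singleton] at hrank
    exact absurd (hdim.trans hrank) (by norm_num)
  obtain ⟨z, hz, hz0⟩ := (Submodule.ne_bot_iff _).mp hspan
  exact ⟨x, z, hx, hz0, Submodule.mem_orthogonal_singleton_iff_inner_right.mp hz⟩

variable {f : X → ℝ}

theorem inner_mul_one_sub_eq_of_add_eq_mul_sub_inner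
    (hf : ∀ x y : X, f (x + y) = f x * f y - ⟪x, y⟫) (x y z : X) :
    ⟪x, y⟫ * (1 - f z) = ⟪y, z⟫ * (1 - f x) := by
  have hassoc := congrArg f (add_assoc x y z)
  rw [hf, hf x y, hf x, hf y z, inner_add_left, inner_add_right] at hassoc
  linarith

theorem eq_one_of_add_eq_mul_sub_inner (hf : ∀ x y : X, f (x + y) = f x * f y - ⟪x, y⟫)
    {x z : X} (hx : x ≠ 0) (hxz : ⟪x, z⟫ = 0) : f z = 1 := by
  have h := inner_mul_one_sub_eq_of_add_eq_mul_sub_inner hf x x z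
  rw [hxz, zero_mul, mul_eq_zero, inner_self_eq_zero (𝕜 := ℝ)] at h
  exact (sub_eq_zero.mp (h.resolve_left hx)).symm

theorem eq_zero_of_add_eq_mul_sub_inner (hf : ∀ x y : X, f (x + y) = f x * f y - ⟪x, y⟫)
    {x z : X} (hx : x ≠ 0) (hxz : ⟪x, z⟫ = 0) : z = 0 := by
  have hxzz : ⟪x, z + z⟫ = 0 := by rw [inner_add_right, hxz, add_zero]
  have h := hf z z
  rw [eq_one_of_add_eq_mul_sub_inner hf hx hxz, eq_one_of_add_eq_mul_sub_inner hf hx hxzz] at h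
  exact inner_self_eq_zero (𝕜 := ℝ) |>.mp (by linarith)

end

theorem stmt_12 {X : Type*} [NormedAddCommGroup X] [InnerProductSpace ℝ X]
    (hdim : 2 ≤ Module.rank ℝ X) :
    ¬ ∃ f : X → ℝ, ∀ x y : X, f (x + y) = f x * f y - ⟪x, y⟫ := by
  rintro ⟨f, hf⟩
  obtain ⟨x, z, hx, hz, hxz⟩ := exists_ne_zero_inner_eq_zero_of_two_le_rank hdim
  exact hz (eq_zero_of_add_eq_mul_sub_inner hf hx hxz)
end

section
/- Let X be a complex vector space, A : X → ℂ additive and nonzero, and γ ∈ ℂ. The function f(x) = γ·A(x) + 1 satisfies f(x+y) = f(x)f(y) + A(x)A(y) for all x, y ∈ X if and only if γ = i or γ = -i. -/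
theorem stmt_15 {X : Type*} [AddCommGroup X] [Module ℂ X]
    (A : X → ℂ) (hA : ∀ x y : X, A (x + y) = A x + A y) (hA0 : A ≠ 0) (γ : ℂ) :
    (∀ x y : X, (γ * A (x + y) + 1) =
      (γ * A x + 1) * (γ * A y + 1) + A x * A y) ↔ γ = Complex.I ∨ γ = -Complex.I := by
  constructor
  · intro h
    obtain ⟨x0, hx0⟩ : ∃ x, A x ≠ 0 := by
      by_contra hc
      push_neg at hc
      exact hA0 (funext hc)
    have hxy := h x0 x0
    rw [hA] at hxy
    have h2 : (γ ^ 2 + 1) * (A x0 * A x0) = 0 := by linear_combination -hxy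
    have hsq : γ ^ 2 + 1 = 0 := by
      rcases mul_eq_zero.mp h2 with h3 | h3
      · exact h3
      · exact absurd h3 (mul_ne_zero hx0 hx0)
    have hfac : (γ - Complex.I) * (γ + Complex.I) = 0 := by
      have hI : Complex.I ^ 2 = -1 := Complex.I_sq
      linear_combination hsq - hI
    rcases mul_eq_zero.mp hfac with h3 | h3
    · left; linear_combination h3
    · right; linear_combination h3
  · intro h x y
    have hsq : γ ^ 2 = -1 := by
      rcases h with h | h <;> subst h <;> simp [Complex.I_sq]
    rw [hA]
    linear_combination (-(A x * A y)) * hsq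
end

section
/- Let X be a vector space over K ∈ {ℝ,ℂ}, φ : X × X → K biadditive with φ(z₀,z₀) ≠ 0 for some z₀, and f : X → K a solution of f(x+y) = f(x)f(y) - φ(x,y). Then the set Z₀ = {z ∈ X : φ(z,z) ≠ 0} contains no pair x, y with φ(x,y) = 0; i.e., if x, y ∈ Z₀ then φ(x,y) ≠ 0. -/
theorem stmt_17 {K : Type*} [RCLike K] {X : Type*} [AddCommGroup X] [Module K X]
    (φ : X → X → K)
    (hφ1 : ∀ x x' y : X, φ (x + x') y = φ x y + φ x' y)
    (hφ2 : ∀ x y y' : X, φ x (y + y') = φ x y + φ x y')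
    (f : X → K)
    (hf : ∀ x y : X, f (x + y) = f x * f y - φ x y)
    (z₀ : X) (hz₀ : φ z₀ z₀ ≠ 0) :
    ∀ x y : X, φ x x ≠ 0 → φ y y ≠ 0 → φ x y ≠ 0 := by
  intro x y hx hy hxy
  -- basic biadditivity consequences
  have hx0 : ∀ a : X, φ a 0 = 0 := by
    intro a
    have h := hφ2 a 0 0
    rw [add_zero] at h
    linear_combination -h
  have h0y : ∀ b : X, φ 0 b = 0 := by
    intro b
    have h := hφ1 0 0 b
    rw [add_zero] at h
    linear_combination -h
  have hneg2 : ∀ a b : X, φ a (-b) = -φ a b := by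
    intro a b
    have h := hφ2 a b (-b)
    rw [add_neg_cancel, hx0] at h
    linear_combination -h
  -- symmetry of φ on x, y
  have hyx : φ y x = 0 := by
    have h1 := hf x y
    have h2 := hf y x
    rw [add_comm y x] at h2
    linear_combination h2 - h1 + hxy
  -- f 0 = 1
  have hf00 : f 0 * (f 0 - 1) = 0 := by
    have h := hf 0 0
    rw [add_zero, h0y] at h
    linear_combination -h
  have hf0 : f 0 = 1 := by
    rcases mul_eq_zero.mp hf00 with h | h
    · exfalso
      have hz : ∀ w : X, f w = 0 := by
        intro w
        have hw := hf w 0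
        rw [add_zero, hx0, h] at hw
        linear_combination hw
      have := hf z₀ z₀
      simp only [hz] at this
      exact hz₀ (by linear_combination this)
    · linear_combination h
  -- f x * f (-x) = 1 - φ x x, and similarly for y
  have hinvx : f x * f (-x) = 1 - φ x x := by
    have h := hf x (-x)
    rw [add_neg_cancel, hf0, hneg2] at h
    linear_combination -h
  have hinvy : f y * f (-y) = 1 - φ y y := by
    have h := hf y (-y)
    rw [add_neg_cancel, hf0, hneg2] at h
    linear_combination -h
  -- f (x+y) = f x * f y
  have hfxy : f (x + y) = f x * f y := by
    have h := hf x y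
    rw [hxy] at h
    linear_combination h
  -- f y = 1
  have hφs1 : φ (x + y) (-x) = -φ x x := by
    rw [hneg2 (x + y) x, hφ1 x y x, hyx]
    ring
  have hfy1 : f y = 1 := by
    have h := hf (x + y) (-x)
    have key : x + y + -x = y := by abel
    rw [key, hφs1, hfxy] at h
    -- h : f y = (f x * f y) * f (-x) + φ x x
    have hmul : φ x x * (f y - 1) = 0 := by
      linear_combination h + f y * hinvx
    rcases mul_eq_zero.mp hmul with h' | h'
    · exact absurd h' hx
    · linear_combination h'
  have hφs2 : φ (x + y) (-y) = -φ y y := by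
    rw [hneg2 (x + y) y, hφ1 x y y, hxy]
    ring
  have hfx1 : f x = 1 := by
    have h := hf (x + y) (-y)
    have key : x + y + -y = x := by abel
    rw [key, hφs2, hfxy] at h
    have hmul : φ y y * (f x - 1) = 0 := by
      linear_combination h + f x * hinvy
    rcases mul_eq_zero.mp hmul with h' | h'
    · exact absurd h' hy
    · linear_combination h'
  -- expand f(2x+2y) two ways
  have hφsum : φ (x + y) (x + y) = φ x x + φ y y := by
    rw [hφ1, hφ2, hφ2, hxy, hyx]
    ring
  have hφcross : φ (x + x) (y + y) = 0 := by
    rw [hφ1, hφ2, hxy]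
    ring
  have h6 := hf (x + y) (x + y)
  rw [hφsum, hfxy, hfx1, hfy1] at h6
  have h7 := hf (x + x) (y + y)
  rw [hφcross] at h7
  have hf2x : f (x + x) = 1 - φ x x := by
    have h := hf x x
    rw [hfx1] at h
    linear_combination h
  have hf2y : f (y + y) = 1 - φ y y := by
    have h := hf y y
    rw [hfy1] at h
    linear_combination h
  rw [hf2x, hf2y] at h7
  have key : x + y + (x + y) = x + x + (y + y) := by abel
  rw [key] at h6
  have : φ x x * φ y y = 0 := by linear_combination h6 - h7
  rcases mul_eq_zero.mp this with h' | h'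
  · exact hx h'
  · exact hy h'
end

section
/- Let X be a vector space over K ∈ {ℝ,ℂ}, φ : X × X → K biadditive, f : X → K satisfying f(x+y) = f(x)f(y) - φ(x,y) with φ(z₀,z₀) ≠ 0 for some z₀. Then there exist a ≠ 0 in K and an additive functional F : X → K, F ≠ 0, such that φ(x,y) = a²·F(x)·F(y) for all x, y ∈ X. -/
theorem stmt_18 {K : Type*} [RCLike K] {X : Type*} [AddCommGroup X] [Module K X]
    (φ : X → X → K)
    (hφ1 : ∀ x x' y : X, φ (x + x') y = φ x y + φ x' y)
    (hφ2 : ∀ x y y' : X, φ x (y + y') = φ x y + φ x y')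
    (f : X → K)
    (hf : ∀ x y : X, f (x + y) = f x * f y - φ x y)
    (z₀ : X) (hz₀ : φ z₀ z₀ ≠ 0) :
    ∃ (a : K) (F : X → K), a ≠ 0 ∧ (∀ x y : X, F (x + y) = F x + F y) ∧ F ≠ 0 ∧
      ∀ x y : X, φ x y = a ^ 2 * F x * F y := by
  set F : X → K := fun x => f x - 1 with hF
  have key : ∀ x y z : X, φ x y * (f z - 1) = φ y z * (f x - 1) := by
    intro x y z
    have h1 := hf (x + y) z
    have h2 := hf x (y + z)
    rw [hf x y, hφ1 x y z] at h1
    rw [hf y z, hφ2 x y z] at h2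
    rw [add_assoc] at h1
    linear_combination h1 - h2
  have hg : ∀ w : X, φ z₀ z₀ * F w = φ z₀ w * F z₀ := fun w => key z₀ z₀ w
  have hadd : ∀ x y : X, F (x + y) = F x + F y := by
    intro x y
    have h1 := hg (x + y)
    rw [hφ2 z₀ x y] at h1
    have h2 := hg x
    have h3 := hg y
    have : φ z₀ z₀ * F (x + y) = φ z₀ z₀ * (F x + F y) := by
      linear_combination h1 - h2 - h3
    exact mul_left_cancel₀ hz₀ this
  have hφeq : ∀ x y : X, φ x y = F x * F y := by
    intro x y
    have h := hf x y
    have h2 := hadd x y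
    simp only [hF] at h2 ⊢
    linear_combination h - h2
  refine ⟨1, F, one_ne_zero, hadd, ?_, ?_⟩
  · intro h0
    apply hz₀
    rw [hφeq z₀ z₀, h0]
    simp
  · intro x y
    rw [hφeq x y]
    ring
end
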